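/- arXiv:1908.06084 — 3 statements merged into one kernel-verified Lean document; each statement's English description precedes it below -/
import Mathlib

section
/- Let a, b ∈ (0,1] with a² + b² ≤ 1, and let c ∈ [0,1] with a² + b² ≤ c². Then there exists α₁ ∈ (0,2] such that c^{α₁} = a^{α₁} + b^{α₁}. -/
open Set

theorem Real.exists_rpow_eq_rpow_add_rpow {a b c p : ℝ} (ha : a ≠ 0) (hb : b ≠ 0) (hc : c ≠ 0)
    (hp : 0 < p) (h : a ^ p + b ^ p ≤ c ^ p) : ∃ α ∈ Ioc 0 p, c ^ α = a ^ α + b ^ α := by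
  set gap : ℝ → ℝ := fun α => c ^ α - (a ^ α + b ^ α)
  have hgap : Continuous gap :=
    continuous_iff_continuousAt.2 fun _ =>
      (Real.continuousAt_const_rpow hc).sub
        ((Real.continuousAt_const_rpow ha).add (Real.continuousAt_const_rpow hb))
  have hgap0 : gap 0 = -1 := by norm_num [gap]
  have hzero : (0 : ℝ) ∈ Icc (gap 0) (gap p) := ⟨by rw [hgap0]; norm_num, sub_nonneg.2 h⟩
  obtain ⟨α, ⟨hα0, hαp⟩, hα⟩ := intermediate_value_Icc hp.le hgap.continuousOn hzero
  have hα_ne : 0 ≠ α := by rintro rfl; norm_num [hgap0] at hα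
  exact ⟨α, ⟨hα0.lt_of_ne hα_ne, hαp⟩, sub_eq_zero.1 hα⟩

theorem stmt_5_general (a b c : ℝ) (ha : 0 < a) (hb : 0 < b) (habc : a ^ 2 + b ^ 2 ≤ c ^ 2) :
    ∃ α₁ : ℝ, 0 < α₁ ∧ α₁ ≤ 2 ∧ c ^ α₁ = a ^ α₁ + b ^ α₁ := by
  have hc0 : c ≠ 0 := by rintro rfl; nlinarith
  obtain ⟨α, ⟨hα0, hα2⟩, hα⟩ := Real.exists_rpow_eq_rpow_add_rpow ha.ne' hb.ne' hc0 two_pos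
    (by simpa only [Real.rpow_two] using habc)
  exact ⟨α, hα0, hα2, hα⟩

theorem stmt_5 (a b c : ℝ) (ha : 0 < a) (ha1 : a ≤ 1) (hb : 0 < b) (hb1 : b ≤ 1)
    (hab : a ^ 2 + b ^ 2 ≤ 1) (hc : 0 ≤ c) (hc1 : c ≤ 1) (habc : a ^ 2 + b ^ 2 ≤ c ^ 2) :
    ∃ α₁ : ℝ, 0 < α₁ ∧ α₁ ≤ 2 ∧ c ^ α₁ = a ^ α₁ + b ^ α₁ :=
  stmt_5_general a b c ha hb habc
end

section
/- Let a₁, …, a_m ∈ (0,1] with m ≥ 2 and Σᵢ aᵢ^{√2} ≤ 1, and let c ∈ [0,1]. Then there exists α₀ ∈ (0,√2] with Σᵢ aᵢ^{α₀} = 1, and for every α ∈ [0, α₀], c^α ≤ Σᵢ aᵢ^α. -/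
/-! The map `α ↦ ∑ aᵢ ^ α` is continuous and, since every `aᵢ ∈ (0, 1]`, antitone. It equals
`m ≥ 2` at `0` and is at most `1` at `√2`, so the intermediate value theorem gives `α₀`; then for
`α ≤ α₀` we get `c ^ α ≤ 1 = ∑ aᵢ ^ α₀ ≤ ∑ aᵢ ^ α`. -/

open Finset

theorem continuous_sum_rpow {ι : Type*} (s : Finset ι) {a : ι → ℝ} (ha : ∀ i ∈ s, a i ≠ 0) :
    Continuous fun α : ℝ => ∑ i ∈ s, a i ^ α :=
  continuous_finsetSum s fun i hi =>
    continuous_const.rpow continuous_id fun _ => Or.inl (ha i hi)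

theorem antitone_sum_rpow {ι : Type*} (s : Finset ι) {a : ι → ℝ}
    (ha : ∀ i ∈ s, 0 < a i ∧ a i ≤ 1) : Antitone fun α : ℝ => ∑ i ∈ s, a i ^ α :=
  fun _ _ hαβ => sum_le_sum fun i hi => Real.rpow_le_rpow_of_exponent_ge (ha i hi).1 (ha i hi).2 hαβ

theorem exists_pos_le_sum_rpow_eq_one {ι : Type*} [Fintype ι] (hι : 1 < Fintype.card ι)
    {a : ι → ℝ} (ha : ∀ i, a i ≠ 0) {β : ℝ} (hβ : 0 ≤ β) (hsum : ∑ i, a i ^ β ≤ 1) :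
    ∃ α₀, 0 < α₀ ∧ α₀ ≤ β ∧ ∑ i, a i ^ α₀ = 1 := by
  have hzero : ∑ i, a i ^ (0 : ℝ) = Fintype.card ι := by simp
  have hone_le : (1 : ℝ) ≤ Fintype.card ι := by exact_mod_cast hι.le
  obtain ⟨α₀, ⟨hα₀, hα₀β⟩, hα₀sum⟩ :=
    intermediate_value_Icc' hβ (continuous_sum_rpow univ fun i _ => ha i).continuousOn
      ⟨hsum, hzero ▸ hone_le⟩
  refine ⟨α₀, hα₀.lt_of_ne ?_, hα₀β, hα₀sum⟩
  rintro rfl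
  have : (Fintype.card ι : ℝ) = 1 := hzero ▸ hα₀sum
  exact hι.ne' (by exact_mod_cast this)

theorem stmt_8 (m : ℕ) (hm : 2 ≤ m) (a : Fin m → ℝ)
    (ha : ∀ i, 0 < a i ∧ a i ≤ 1) (hsum : ∑ i, (a i) ^ (Real.sqrt 2) ≤ 1)
    (c : ℝ) (hc : 0 ≤ c) (hc1 : c ≤ 1) :
    ∃ α₀ : ℝ, 0 < α₀ ∧ α₀ ≤ Real.sqrt 2 ∧ (∑ i, (a i) ^ α₀ = 1) ∧
      ∀ α : ℝ, 0 ≤ α → α ≤ α₀ → c ^ α ≤ ∑ i, (a i) ^ α := by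
  obtain ⟨α₀, hα₀, hα₀le, hα₀sum⟩ := exists_pos_le_sum_rpow_eq_one
    (by rwa [Fintype.card_fin]) (fun i => (ha i).1.ne') (Real.sqrt_nonneg 2) hsum
  refine ⟨α₀, hα₀, hα₀le, hα₀sum, fun α hα hαα₀ => ?_⟩
  calc c ^ α ≤ 1 := Real.rpow_le_one hc hc1 hα
    _ = ∑ i, a i ^ α₀ := hα₀sum.symm
    _ ≤ ∑ i, a i ^ α := antitone_sum_rpow univ (fun i _ => ha i) hαα₀
end

section
/- Let a, b, c ∈ (0,1] with a² + b² ≤ c² and max(a,b) < c. Define g(α) = a^α + b^α − c^α on [0,∞). Then g(0) = 1 > 0, g(2) ≤ 0, and g has at least one zero in (0,2]; moreover, every zero α₁ of g satisfies α₁ ≥ α₀ where α₀ is the unique solution of a^{α₀} + b^{α₀} = 1 (assuming a² + b² < 1). -/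
/-!
At `α = 0` the gap `a ^ α + b ^ α - c ^ α` equals `1`, and at `α = 2` it is `≤ 0` because
`a² + b² ≤ c²`, so by continuity it vanishes somewhere in `(0, 2]`. For the lower bound, `a, b < 1`
makes `α ↦ a ^ α + b ^ α` strictly decreasing: below `α₀` it exceeds `1 ≥ c ^ α`, so no zero lies
there.
-/

open Set

namespace Real

variable {a b c : ℝ}

lemma continuous_rpow_add_rpow_sub_rpow (ha : 0 < a) (hb : 0 < b) (hc : 0 < c) :
    Continuous fun α : ℝ => a ^ α + b ^ α - c ^ α := by
  have hexp {x : ℝ} (hx : 0 < x) : Continuous fun α : ℝ => x ^ α :=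
    continuous_const.rpow continuous_id fun _ => Or.inl hx.ne'
  exact ((hexp ha).add (hexp hb)).sub (hexp hc)

lemma exists_rpow_add_rpow_eq_rpow (ha : 0 < a) (hb : 0 < b) (hc : 0 < c) {p : ℝ} (hp : 0 ≤ p)
    (hsum : a ^ p + b ^ p ≤ c ^ p) : ∃ α ∈ Ioc 0 p, a ^ α + b ^ α = c ^ α := by
  set g : ℝ → ℝ := fun α => a ^ α + b ^ α - c ^ α
  have hzero : (0 : ℝ) ∈ Icc (g p) (g 0) := ⟨by simp only [g]; linarith, by simp [g]⟩
  obtain ⟨α, hα, hgα⟩ := intermediate_value_Icc' hp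
    (continuous_rpow_add_rpow_sub_rpow ha hb hc).continuousOn hzero
  have hα0 : α ≠ 0 := by
    rintro rfl
    simp at hgα
  exact ⟨α, ⟨lt_of_le_of_ne hα.1 (Ne.symm hα0), hα.2⟩, sub_eq_zero.mp hgα⟩

lemma le_of_rpow_add_rpow_eq_rpow (ha : 0 < a) (ha1 : a < 1) (hb : 0 < b) (hb1 : b < 1)
    (hc : 0 < c) (hc1 : c ≤ 1) {α₀ α : ℝ} (heq : a ^ α₀ + b ^ α₀ = 1) (hα : 0 ≤ α)
    (hsum : a ^ α + b ^ α = c ^ α) : α₀ ≤ α := by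
  by_contra! hlt
  have ha_pow : a ^ α₀ < a ^ α := rpow_lt_rpow_of_exponent_gt ha ha1 hlt
  have hb_pow : b ^ α₀ < b ^ α := rpow_lt_rpow_of_exponent_gt hb hb1 hlt
  have hc_pow : c ^ α ≤ 1 := rpow_le_one hc.le hc1 hα
  linarith

end Real

theorem stmt_17_general (a b c : ℝ) (ha : 0 < a) (hb : 0 < b)
    (hc : 0 < c) (hc1 : c ≤ 1) (habc : a ^ 2 + b ^ 2 ≤ c ^ 2)
    (hlt : a ^ 2 + b ^ 2 < 1)
    (α₀ : ℝ) (heq : a ^ α₀ + b ^ α₀ = 1) :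
    (a ^ (0 : ℝ) + b ^ (0 : ℝ) - c ^ (0 : ℝ) = 1) ∧
    (a ^ (2 : ℝ) + b ^ (2 : ℝ) - c ^ (2 : ℝ) ≤ 0) ∧
    (∃ α₁ : ℝ, 0 < α₁ ∧ α₁ ≤ 2 ∧ a ^ α₁ + b ^ α₁ - c ^ α₁ = 0) ∧
    (∀ α₁ : ℝ, 0 ≤ α₁ → a ^ α₁ + b ^ α₁ - c ^ α₁ = 0 → α₀ ≤ α₁) := by
  have hsq : a ^ (2 : ℝ) + b ^ (2 : ℝ) ≤ c ^ (2 : ℝ) := by simpa only [Real.rpow_two] using habc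
  have ha1 : a < 1 := by nlinarith
  have hb1 : b < 1 := by nlinarith
  refine ⟨by simp, sub_nonpos.mpr hsq, ?_, fun α₁ hα₁ hzero => ?_⟩
  · obtain ⟨α₁, ⟨hpos, hle⟩, hsum⟩ := Real.exists_rpow_add_rpow_eq_rpow ha hb hc zero_le_two hsq
    exact ⟨α₁, hpos, hle, sub_eq_zero.mpr hsum⟩
  · exact Real.le_of_rpow_add_rpow_eq_rpow ha ha1 hb hb1 hc hc1 heq hα₁ (sub_eq_zero.mp hzero)

theorem stmt_17 (a b c : ℝ) (ha : 0 < a) (ha1 : a ≤ 1) (hb : 0 < b) (hb1 : b ≤ 1)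
    (hc : 0 < c) (hc1 : c ≤ 1) (habc : a ^ 2 + b ^ 2 ≤ c ^ 2) (hmax : max a b < c)
    (hlt : a ^ 2 + b ^ 2 < 1)
    (α₀ : ℝ) (hα₀ : 0 < α₀) (heq : a ^ α₀ + b ^ α₀ = 1) :
    (a ^ (0 : ℝ) + b ^ (0 : ℝ) - c ^ (0 : ℝ) = 1) ∧
    (a ^ (2 : ℝ) + b ^ (2 : ℝ) - c ^ (2 : ℝ) ≤ 0) ∧
    (∃ α₁ : ℝ, 0 < α₁ ∧ α₁ ≤ 2 ∧ a ^ α₁ + b ^ α₁ - c ^ α₁ = 0) ∧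
    (∀ α₁ : ℝ, 0 ≤ α₁ → a ^ α₁ + b ^ α₁ - c ^ α₁ = 0 → α₀ ≤ α₁) :=
  stmt_17_general a b c ha hb hc hc1 habc hlt α₀ heq
end
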